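/- arXiv:2306.02635 — 2 statements merged into one kernel-verified Lean document; each statement's English description precedes it below -/
import Mathlib

section
/- Let r ≤ 1 be an odd integer coprime with 5, and let p be an odd prime with p ≡ 2r (mod 5) and p ≥ (5-r)/2. Then Σ_{k=0}^{(3p-r)/5} (10k+r) · ((r/5)_k)⁵/((1)_k)⁵ · ( Σ_{j=0}^{k-1} 1/(r/5+j)⁴ - Σ_{j=1}^{k} 1/j⁴ ) ≡ 0 (mod p) in ℤ_p. -/
/-!
Reduce modulo `p`. Since `5x = r ≡ -5n`, the residue of `x` is `-n`, so `(x)_k / k!` becomes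
`(-1)^k binom(n, k)`, `10k + r` becomes `5(2k - n)`, and the inner sum becomes
`H n - H (n - k) - H k` with `H m = ∑_{j=1}^{m} j⁻⁴`. For even `n` the factor multiplying
`2k - n` is invariant under `k ↦ n - k`, so the reduced sum vanishes identically.
-/

open Finset Nat

theorem Finset.sum_range_two_mul_sub_mul_eq_zero {R : Type*} [CommRing R] {n : ℕ} {g : ℕ → R}
    (hg : ∀ k ≤ n, g (n - k) = g k) :
    ∑ k ∈ range (n + 1), (2 * (k : R) - n) * g k = 0 := by
  have hreflect :
      ∑ k ∈ range (n + 1), ((n : R) - k) * g k = ∑ k ∈ range (n + 1), (k : R) * g k := by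
    rw [← sum_range_reflect]
    refine sum_congr rfl fun k hk => ?_
    have hkn : k ≤ n := Nat.lt_succ_iff.mp (mem_range.mp hk)
    rw [Nat.add_sub_cancel, Nat.cast_sub hkn, hg k hkn, sub_sub_cancel]
  calc ∑ k ∈ range (n + 1), (2 * (k : R) - n) * g k
      = ∑ k ∈ range (n + 1), (k : R) * g k - ∑ k ∈ range (n + 1), ((n : R) - k) * g k := by
        rw [← sum_sub_distrib]
        exact sum_congr rfl fun k _ => by ring
    _ = 0 := by rw [hreflect, sub_self]

theorem Finset.sum_Icc_add_sum_range_sub {M : Type*} [AddCommMonoid M] (f : ℕ → M) {n k : ℕ}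
    (hk : k ≤ n) : ∑ j ∈ Icc 1 (n - k), f j + ∑ j ∈ range k, f (n - j) = ∑ j ∈ Icc 1 n, f j := by
  rw [range_eq_Ico, sum_Ico_reflect f 0 (by omega), Nat.sub_zero,
    show n + 1 - k = n - k + 1 by omega, ← Ico_add_one_right_eq_Icc, ← Ico_add_one_right_eq_Icc,
    sum_Ico_consecutive f (by omega) (by omega)]

theorem neg_one_pow_sub_of_even {R : Type*} [Ring R] {n k : ℕ} (hn : Even n) (hk : k ≤ n) :
    (-1 : R) ^ (n - k) = (-1) ^ k := by
  obtain ⟨m, rfl⟩ := hn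
  rw [neg_one_pow_eq_pow_mod_two, neg_one_pow_eq_pow_mod_two (n := k)]
  congr 1
  omega

theorem ascPochhammer_eval_neg_natCast_mul_inv_factorial {F : Type*} [Field F] {n k : ℕ}
    (hk : (k ! : F) ≠ 0) :
    (ascPochhammer F k).eval (-(n : F)) * (k ! : F)⁻¹ = (-1) ^ k * n.choose k := by
  rw [ascPochhammer_eval_neg_eq_descPochhammer, descPochhammer_eval_eq_descFactorial,
    Nat.descFactorial_eq_factorial_mul_choose, Nat.cast_mul]
  field_simp

def powHarmonic (F : Type*) [DivisionRing F] (m N : ℕ) : F :=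
  ∑ j ∈ Icc 1 N, (j : F)⁻¹ ^ m

namespace PadicInt

variable {p : ℕ} [Fact p.Prime]

theorem natCast_dvd_iff_toZMod_eq_zero (a : ℤ_[p]) : (p : ℤ_[p]) ∣ a ↔ toZMod a = 0 := by
  rw [← Ideal.mem_span_singleton, ← maximalIdeal_eq_span_p, ← ker_toZMod, RingHom.mem_ker]

theorem toZMod_ringInverse (a : ℤ_[p]) : toZMod (Ring.inverse a) = (toZMod a)⁻¹ := by
  by_cases ha : IsUnit a
  · obtain ⟨u, rfl⟩ := ha
    rw [Ring.inverse_unit]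
    exact eq_inv_of_mul_eq_one_left (by rw [← map_mul, u.inv_mul, map_one])
  · have ha_ker : a ∈ RingHom.ker (toZMod : ℤ_[p] →+* ZMod p) := by
      rw [ker_toZMod]
      exact ha
    rw [Ring.inverse_non_unit a ha, map_zero, RingHom.mem_ker.mp ha_ker, inv_zero]

theorem toZMod_ascPochhammer_eval_mul_inverse {n k : ℕ} (hkp : k < p) {x : ℤ_[p]}
    (hx : toZMod x = -n) :
    toZMod ((ascPochhammer ℤ_[p] k).eval x) *
        toZMod (Ring.inverse ((ascPochhammer ℤ_[p] k).eval 1)) =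
      (-1) ^ k * n.choose k := by
  have hk : (k ! : ZMod p) ≠ 0 := by
    rw [Ne, ZMod.natCast_eq_zero_iff, (Fact.out : p.Prime).dvd_factorial]
    omega
  rw [← Polynomial.eval_map_apply, ascPochhammer_map, hx, toZMod_ringInverse,
    ascPochhammer_eval_one, map_natCast, ascPochhammer_eval_neg_natCast_mul_inv_factorial hk]

theorem toZMod_sum_range_inverse_pow {n k : ℕ} (hkn : k ≤ n) {x : ℤ_[p]} (hx : toZMod x = -n)
    (m : ℕ) :
    toZMod (∑ j ∈ range k, Ring.inverse (x + j) ^ (2 * m)) =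
      powHarmonic _ (2 * m) n - powHarmonic _ (2 * m) (n - k) := by
  rw [eq_sub_iff_add_eq', powHarmonic, powHarmonic,
    ← sum_Icc_add_sum_range_sub (fun j => (j : ZMod p)⁻¹ ^ (2 * m)) hkn, map_sum]
  congr 1
  refine sum_congr rfl fun j hj => ?_
  have hjn : j ≤ n := (mem_range.mp hj).le.trans hkn
  rw [map_pow, toZMod_ringInverse, map_add, hx, map_natCast, Nat.cast_sub hjn,
    neg_add_eq_sub, ← neg_sub, inv_neg, (even_two_mul m).neg_pow]

theorem toZMod_sum_Icc_inverse_pow (k m : ℕ) :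
    toZMod (∑ j ∈ Icc 1 k, Ring.inverse (j : ℤ_[p]) ^ m) = powHarmonic _ m k := by
  simp only [map_sum, map_pow, toZMod_ringInverse, map_natCast, powHarmonic]

theorem toZMod_summand {n k : ℕ} (hkn : k ≤ n) (hkp : k < p) {x : ℤ_[p]} {r : ℤ}
    (hx : toZMod x = -n) (hr : (r : ZMod p) = -(5 * n)) :
    toZMod ((10 * (k : ℤ_[p]) + (r : ℤ_[p])) * ((ascPochhammer ℤ_[p] k).eval x) ^ 5 *
        Ring.inverse ((ascPochhammer ℤ_[p] k).eval 1) ^ 5 *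
        (∑ j ∈ range k, Ring.inverse (x + (j : ℤ_[p])) ^ 4 -
          ∑ j ∈ Icc 1 k, Ring.inverse (j : ℤ_[p]) ^ 4)) =
      5 * ((2 * (k : ZMod p) - (n : ZMod p)) * (((-1) ^ k * (n.choose k : ZMod p)) ^ 5 *
        (powHarmonic _ 4 n - powHarmonic _ 4 (n - k) - powHarmonic _ 4 k))) := by
  rw [map_mul, map_mul, map_mul, map_pow, map_pow,
    show ∀ a b c d : ZMod p, a * b ^ 5 * c ^ 5 * d = a * (b * c) ^ 5 * d by intros; ring,
    toZMod_ascPochhammer_eval_mul_inverse hkp hx, map_sub,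
    toZMod_sum_range_inverse_pow hkn hx 2, toZMod_sum_Icc_inverse_pow, map_add, map_mul,
    map_natCast, map_intCast, hr, map_ofNat]
  ring

end PadicInt

open PadicInt in
theorem stmt6_general (p : ℕ) [Fact p.Prime] (hp : Odd p)
    (r : ℤ) (hrodd : Odd r) (hr5 : IsCoprime r 5)
    (hpge : 5 - r ≤ 2 * (p : ℤ))
    (n : ℕ) (hn : (n : ℤ) * 5 = 3 * p - r)
    (x : PadicInt p) (hx : 5 * x = (r : PadicInt p)) :
    (p : PadicInt p) ∣
      ∑ k ∈ Finset.range (n + 1),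
        (10 * (k : PadicInt p) + (r : PadicInt p)) *
          ((ascPochhammer (PadicInt p) k).eval x) ^ 5 *
          (Ring.inverse ((ascPochhammer (PadicInt p) k).eval 1)) ^ 5 *
          ((∑ j ∈ Finset.range k, Ring.inverse (x + (j : PadicInt p)) ^ 4) -
            ∑ j ∈ Finset.Icc 1 k, Ring.inverse ((j : PadicInt p)) ^ 4) := by
  have hnp : n < p := by omega
  have hn_even : Even n := by
    obtain ⟨a, rfl⟩ := hp
    obtain ⟨b, rfl⟩ := hrodd
    exact Nat.even_iff.mpr (by omega)
  have hr_mod : (r : ZMod p) = -(5 * n) := by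
    have := congrArg (Int.cast : ℤ → ZMod p) hn
    push_cast [ZMod.natCast_self] at this
    linear_combination this
  have h5 : (5 : ZMod p) ≠ 0 := by
    intro h5
    have hp5 : p = 5 := (Nat.prime_dvd_prime_iff_eq Fact.out Nat.prime_five).mp
      ((ZMod.natCast_eq_zero_iff 5 p).mp (by exact_mod_cast h5))
    have h5r : (5 : ℤ) ∣ r := ⟨3 - n, by rw [hp5] at hn; push_cast at hn; linarith⟩
    have := hr5.isUnit_of_dvd' h5r dvd_rfl
    norm_num [Int.isUnit_iff] at this
  have hx_mod : toZMod x = -n := by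
    have := congrArg toZMod hx
    rw [map_mul, map_ofNat, map_intCast, hr_mod] at this
    exact mul_left_cancel₀ h5 (by linear_combination this)
  rw [natCast_dvd_iff_toZMod_eq_zero, map_sum,
    sum_congr rfl fun k hk => toZMod_summand (Nat.lt_succ_iff.mp (mem_range.mp hk))
      ((mem_range.mp hk).trans_le hnp) hx_mod hr_mod,
    ← mul_sum, sum_range_two_mul_sub_mul_eq_zero, mul_zero]
  intro k hk
  rw [neg_one_pow_sub_of_even hn_even hk, Nat.choose_symm hk, Nat.sub_sub_self hk]
  ring

/-- Lemma 3.2: For `r ≤ 1` odd and coprime with `5`, `p` an odd prime with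
`p ≡ 2r (mod 5)` and `p ≥ (5-r)/2`, with `n = (3p-r)/5` and `x = r/5 ∈ ℤ_p`,
`Σ_{k=0}^{n} (10k+r) (r/5)_k⁵/(1)_k⁵ (Σ_{j=0}^{k-1} 1/(r/5+j)⁴ - Σ_{j=1}^{k} 1/j⁴) ≡ 0 (mod p)`. -/
theorem stmt6 (p : ℕ) [Fact p.Prime] (hp : Odd p)
    (r : ℤ) (hr : r ≤ 1) (hrodd : Odd r) (hr5 : IsCoprime r 5)
    (hpr : (p : ℤ) ≡ 2 * r [ZMOD 5]) (hpge : 5 - r ≤ 2 * (p : ℤ))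
    (n : ℕ) (hn : (n : ℤ) * 5 = 3 * p - r)
    (x : PadicInt p) (hx : 5 * x = (r : PadicInt p)) :
    (p : PadicInt p) ∣
      ∑ k ∈ Finset.range (n + 1),
        (10 * (k : PadicInt p) + (r : PadicInt p)) *
          ((ascPochhammer (PadicInt p) k).eval x) ^ 5 *
          (Ring.inverse ((ascPochhammer (PadicInt p) k).eval 1)) ^ 5 *
          ((∑ j ∈ Finset.range k, Ring.inverse (x + (j : PadicInt p)) ^ 4) -
            ∑ j ∈ Finset.Icc 1 k, Ring.inverse ((j : PadicInt p)) ^ 4) :=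
  stmt6_general p hp r hrodd hr5 hpge n hn x hx
end

section
/- Let r ≤ 1 be an integer coprime with 3 and p > 3 a prime with p ≡ -r (mod 3) and p ≥ 3 - r. Then Σ_{j=1}^{(2p-r)/3} 1/j ≡ Σ_{j=1}^{(p+r-3)/3} 1/j (mod p) in ℤ_p. -/
/-!
Since `n + m + 1 = p`, reducing modulo `p` turns the difference of the two harmonic sums into
`∑_{m < j ≤ p - 1 - m} 1/j` in `ZMod p`, and `j ↦ p - j` pairs each term of that sum with its
negative; no term is its own partner because `p` is odd.
-/

open Finset

instance PadicInt.isLocalHom_toZMod (p : ℕ) [Fact p.Prime] :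
    IsLocalHom (PadicInt.toZMod : ℤ_[p] →+* ZMod p) where
  map_nonunit x hx := by
    by_contra hx'
    have hker : x ∈ RingHom.ker (PadicInt.toZMod : ℤ_[p] →+* ZMod p) := by
      rw [PadicInt.ker_toZMod]
      exact hx'
    exact hx.ne_zero hker

theorem PadicInt.p_dvd_iff_toZMod_eq_zero {p : ℕ} [Fact p.Prime] {x : ℤ_[p]} :
    (p : ℤ_[p]) ∣ x ↔ PadicInt.toZMod x = 0 := by
  rw [← Ideal.mem_span_singleton, ← PadicInt.maximalIdeal_eq_span_p, ← PadicInt.ker_toZMod,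
    RingHom.mem_ker]

theorem map_ringInverse {M K F : Type*} [MonoidWithZero M] [GroupWithZero K] [FunLike F M K]
    [MonoidWithZeroHomClass F M K] (f : F) [IsLocalHom f] (x : M) :
    f (Ring.inverse x) = (f x)⁻¹ := by
  by_cases hx : IsUnit x
  · exact eq_inv_of_mul_eq_one_left (by rw [← map_mul, Ring.inverse_mul_cancel x hx, map_one])
  · have hfx : f x = 0 := by simpa using mt (isUnit_of_map_unit f x) hx
    rw [Ring.inverse_non_unit x hx, map_zero, hfx, inv_zero]

theorem ZMod.sum_Ioc_inv_eq_zero {p : ℕ} [Fact p.Prime] (hp : p ≠ 2) {a b : ℕ}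
    (hab : a + b + 1 = p) : ∑ j ∈ Ioc b a, (j : ZMod p)⁻¹ = 0 := by
  have hodd : p % 2 = 1 := Nat.odd_iff.mp ((Fact.out : p.Prime).odd_of_ne_two hp)
  refine sum_involution (fun j _ => p - j) (fun j hj => ?_) (fun j hj _ => ?_) (fun j hj => ?_)
    (fun j hj => ?_) <;> simp only [mem_Ioc] at hj ⊢
  · rw [Nat.cast_sub (by omega), ZMod.natCast_self, zero_sub, inv_neg, add_neg_cancel]
  all_goals omega

theorem ZMod.sum_Icc_inv_eq_of_add_add_one_eq {p : ℕ} [Fact p.Prime] (hp : p ≠ 2) {a b : ℕ}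
    (hab : a + b + 1 = p) : ∑ j ∈ Icc 1 a, (j : ZMod p)⁻¹ = ∑ j ∈ Icc 1 b, (j : ZMod p)⁻¹ := by
  wlog hba : b ≤ a generalizing a b
  · exact (this (by omega) (by omega)).symm
  have hIcc (k : ℕ) : Icc 1 k = Ioc 0 k := Icc_add_one_left_eq_Ioc 0 k
  rw [hIcc, hIcc, ← sum_Ioc_consecutive _ (Nat.zero_le b) hba, ZMod.sum_Ioc_inv_eq_zero hp hab,
    add_zero]

theorem stmt14_general (p : ℕ) [Fact p.Prime] (hp3 : 3 < p)
    (r : ℤ)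
    (n m : ℕ) (hn : (n : ℤ) * 3 = 2 * p - r) (hm : (m : ℤ) * 3 = p + r - 3) :
    (p : PadicInt p) ∣
      (∑ j ∈ Finset.Icc 1 n, Ring.inverse ((j : PadicInt p))) -
        ∑ j ∈ Finset.Icc 1 m, Ring.inverse ((j : PadicInt p)) := by
  have hnm : n + m + 1 = p := by omega
  rw [PadicInt.p_dvd_iff_toZMod_eq_zero, map_sub, map_sum, map_sum, sub_eq_zero]
  simp only [map_ringInverse, map_natCast]
  exact ZMod.sum_Icc_inv_eq_of_add_add_one_eq (by omega) hnm

/-- Under the hypotheses of Theorem 1.1, with `n = (2p-r)/3` and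
`m = (p+r-3)/3`, one has `Σ_{j=1}^{(2p-r)/3} 1/j ≡ Σ_{j=1}^{(p+r-3)/3} 1/j (mod p)` in `ℤ_p`. -/
theorem stmt14 (p : ℕ) [Fact p.Prime] (hp3 : 3 < p)
    (r : ℤ) (hr : r ≤ 1) (hr3 : IsCoprime r 3)
    (hpr : (p : ℤ) ≡ -r [ZMOD 3]) (hpge : 3 - r ≤ (p : ℤ))
    (n m : ℕ) (hn : (n : ℤ) * 3 = 2 * p - r) (hm : (m : ℤ) * 3 = p + r - 3) :
    (p : PadicInt p) ∣
      (∑ j ∈ Finset.Icc 1 n, Ring.inverse ((j : PadicInt p))) -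
        ∑ j ∈ Finset.Icc 1 m, Ring.inverse ((j : PadicInt p)) :=
  stmt14_general p hp3 r n m hn hm
end
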